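/- Fix integers n ≥ 1, d ≥ 1, τ ≥ 1, constants L > 0, β ≥ 1, κ ≥ 0, ζ_1, …, ζ_n ≥ 0, a learning rate η > 0, and a point θ ∈ ℝ^d. Let f_1, …, f_n : ℝ^d → ℝ be differentiable with L-Lipschitz gradients, set f := (1/n)·Σ_{i=1}^n f_i, and suppose (1/n)·Σ_{i=1}^n ‖∇f_i(x)‖² ≤ β²·‖∇f(x)‖² + κ² for all x ∈ ℝ^d. On a probability space with a filtration (ℱ_s)_{s=0,…,τ}, let random vectors θ_i^s and g_i^s satisfy: θ_i^0 = θ; θ_i^{s+1} = θ_i^s − η·g_i^s; θ_i^s is ℱ_s-measurable; E[g_i^s | ℱ_s] = ∇f_i(θ_i^s) almost surely; E‖g_i^s − ∇f_i(θ_i^s)‖² ≤ ζ_i²; and all θ_i^s, g_i^s are square-integrable. Define the averaged local update d_i := (1/τ)·Σ_{s=0}^{τ−1} g_i^s. Then (1/n)·Σ_{i=1}^n E‖d_i‖² ≤ (2·L²/(n·τ))·Σ_{i=1}^n Σ_{s=0}^{τ−1} E‖θ − θ_i^s‖² + 2·(β²·‖∇f(θ)‖² + κ²) + ζ̄², where ζ̄²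 := (1/n)·Σ_{i=1}^n ζ_i². -/

import Mathlib

/-! Each stochastic gradient `g_i^s` has conditional mean `∇f_i(θ_i^s)`, so its second moment
splits (Pythagoras in `L²`) into its variance, at most `ζ_i²`, and `E‖∇f_i(θ_i^s)‖²`, which
`L`-smoothness bounds by `2L² E‖θ - θ_i^s‖² + 2‖∇f_i(θ)‖²`. Jensen's inequality moves the average
over `s` out of the square, and bounded dissimilarity at `θ` turns the client average of
`‖∇f_i(θ)‖²` into `β²‖∇f(θ)‖² + κ²`. -/

open MeasureTheory
open scoped InnerProductSpace

section InnerProduct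

variable {Ω E : Type*} {m mΩ : MeasurableSpace Ω} {μ : Measure Ω}
  [NormedAddCommGroup E] [InnerProductSpace ℝ E]

lemma MeasureTheory.MemLp.integrable_inner {X Y : Ω → E} (hX : MemLp X 2 μ) (hY : MemLp Y 2 μ) :
    Integrable (fun ω => ⟪X ω, Y ω⟫_ℝ) μ :=
  memLp_one_iff_integrable.1 <| (innerSL ℝ : E →L[ℝ] E →L[ℝ] ℝ).memLp_of_bilin 1 hX hY

variable [CompleteSpace E] [IsFiniteMeasure μ]

lemma integral_inner_eq_integral_norm_sq_of_condExp_ae_eq (hm : m ≤ mΩ) {X Y : Ω → E}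
    (hX : MemLp X 2 μ) (hY : MemLp Y 2 μ) (hYm : StronglyMeasurable[m] Y)
    (hcond : μ[X|m] =ᵐ[μ] Y) :
    ∫ ω, ⟪X ω, Y ω⟫_ℝ ∂μ = ∫ ω, ‖Y ω‖ ^ 2 ∂μ := by
  have : IsFiniteMeasure (μ.trim hm) := isFiniteMeasure_trim hm
  have hpull := condExp_bilin_of_stronglyMeasurable_right (innerSL ℝ : E →L[ℝ] E →L[ℝ] ℝ) hYm
    (hX.integrable_inner hY) (hX.integrable one_le_two)
  calc ∫ ω, ⟪X ω, Y ω⟫_ℝ ∂μ = ∫ ω, (μ[fun ω => ⟪X ω, Y ω⟫_ℝ|m]) ω ∂μ :=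
        (integral_condExp hm).symm
    _ = ∫ ω, ⟪Y ω, Y ω⟫_ℝ ∂μ := by
        refine integral_congr_ae ?_
        filter_upwards [hpull, hcond] with ω hω hω'
        rwa [hω'] at hω
    _ = ∫ ω, ‖Y ω‖ ^ 2 ∂μ := by simp_rw [real_inner_self_eq_norm_sq]

lemma integral_norm_sq_eq_of_condExp_ae_eq (hm : m ≤ mΩ) {X Y : Ω → E}
    (hX : MemLp X 2 μ) (hY : MemLp Y 2 μ) (hYm : StronglyMeasurable[m] Y)
    (hcond : μ[X|m] =ᵐ[μ] Y) :
    ∫ ω, ‖X ω‖ ^ 2 ∂μ = ∫ ω, ‖X ω - Y ω‖ ^ 2 ∂μ + ∫ ω, ‖Y ω‖ ^ 2 ∂μ := by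
  have hcross : Integrable (fun ω => 2 * ⟪X ω, Y ω⟫_ℝ) μ := (hX.integrable_inner hY).const_mul 2
  have hY2 : Integrable (fun ω => ‖Y ω‖ ^ 2) μ := hY.integrable_norm_pow'
  have hXY2 : Integrable (fun ω => ‖X ω - Y ω‖ ^ 2) μ := (hX.sub hY).integrable_norm_pow'
  have hrest : Integrable (fun ω => 2 * ⟪X ω, Y ω⟫_ℝ - ‖Y ω‖ ^ 2) μ := hcross.sub hY2
  have hpt : ∀ ω, ‖X ω‖ ^ 2 = ‖X ω - Y ω‖ ^ 2 + (2 * ⟪X ω, Y ω⟫_ℝ - ‖Y ω‖ ^ 2) := fun ω => by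
    rw [norm_sub_sq_real]; ring
  simp_rw [hpt]
  rw [integral_add hXY2 hrest, integral_sub hcross hY2, integral_const_mul,
    integral_inner_eq_integral_norm_sq_of_condExp_ae_eq hm hX hY hYm hcond]
  ring

end InnerProduct

section Lipschitz

variable {E F : Type*} [NormedAddCommGroup E] [NormedAddCommGroup F] {K : NNReal} {G : E → F}

lemma LipschitzWith.norm_sq_le (hG : LipschitzWith K G) (θ x : E) :
    ‖G x‖ ^ 2 ≤ 2 * K ^ 2 * ‖θ - x‖ ^ 2 + 2 * ‖G θ‖ ^ 2 := by
  have hlip : ‖G x - G θ‖ ≤ K * ‖θ - x‖ := by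
    simpa only [norm_sub_rev x θ] using hG.norm_sub_le x θ
  have htri : ‖G x‖ ≤ K * ‖θ - x‖ + ‖G θ‖ :=
    (norm_le_norm_sub_add (G x) (G θ)).trans (add_le_add_left hlip _)
  nlinarith [norm_nonneg (G x), sq_nonneg (K * ‖θ - x‖ - ‖G θ‖)]

variable {Ω : Type*} {mΩ : MeasurableSpace Ω} {μ : Measure Ω}

lemma LipschitzWith.memLp_comp [IsFiniteMeasure μ] {p : ENNReal} (hG : LipschitzWith K G)
    {X : Ω → E} (hX : MemLp X p μ) : MemLp (G ∘ X) p μ := by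
  have hG0 : LipschitzWith K (fun x => G x - G 0) := fun x y => by
    simpa only [edist_sub_right] using hG x y
  convert (hG0.comp_memLp (sub_self _) hX).add (memLp_const (G 0)) using 1
  ext ω
  simp

lemma LipschitzWith.integral_norm_sq_comp_le [IsProbabilityMeasure μ] (hG : LipschitzWith K G)
    {X : Ω → E} (hX : MemLp X 2 μ) (θ : E) :
    ∫ ω, ‖G (X ω)‖ ^ 2 ∂μ ≤ 2 * K ^ 2 * ∫ ω, ‖θ - X ω‖ ^ 2 ∂μ + 2 * ‖G θ‖ ^ 2 := by
  have hdev : Integrable (fun ω => ‖θ - X ω‖ ^ 2) μ :=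
    ((memLp_const θ).sub hX).integrable_norm_pow'
  calc ∫ ω, ‖G (X ω)‖ ^ 2 ∂μ ≤ ∫ ω, (2 * K ^ 2 * ‖θ - X ω‖ ^ 2 + 2 * ‖G θ‖ ^ 2) ∂μ :=
        integral_mono_of_nonneg (.of_forall fun _ => by positivity)
          ((hdev.const_mul _).add (integrable_const _)) (.of_forall fun ω => hG.norm_sq_le θ (X ω))
    _ = 2 * K ^ 2 * ∫ ω, ‖θ - X ω‖ ^ 2 ∂μ + 2 * ‖G θ‖ ^ 2 := by
        rw [integral_add (hdev.const_mul _) (integrable_const _), integral_const_mul,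
          integral_const, probReal_univ, one_smul]

end Lipschitz

section Averaging

variable {ι E : Type*} [NormedAddCommGroup E] [NormedSpace ℝ E]

lemma norm_sq_inv_card_smul_sum_le (s : Finset ι) (x : ι → E) :
    ‖(s.card : ℝ)⁻¹ • ∑ i ∈ s, x i‖ ^ 2 ≤ (s.card : ℝ)⁻¹ * ∑ i ∈ s, ‖x i‖ ^ 2 := by
  rcases s.eq_empty_or_nonempty with rfl | hs
  · simp
  have hcard : (0 : ℝ) < s.card := by exact_mod_cast hs.card_pos
  have hsq : ‖∑ i ∈ s, x i‖ ^ 2 ≤ s.card * ∑ i ∈ s, ‖x i‖ ^ 2 :=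
    (pow_le_pow_left₀ (norm_nonneg _) (norm_sum_le _ _) 2).trans sq_sum_le_card_mul_sum_sq
  rw [norm_smul, mul_pow, Real.norm_of_nonneg (by positivity)]
  calc (s.card : ℝ)⁻¹ ^ 2 * ‖∑ i ∈ s, x i‖ ^ 2
      ≤ (s.card : ℝ)⁻¹ ^ 2 * (s.card * ∑ i ∈ s, ‖x i‖ ^ 2) := by gcongr
    _ = (s.card : ℝ)⁻¹ * ∑ i ∈ s, ‖x i‖ ^ 2 := by field_simp

lemma one_div_mul_sum_range_le_add {τ : ℕ} (hτ : τ ≠ 0) {a b : ℕ → ℝ} {c : ℝ}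
    (h : ∀ s < τ, a s ≤ c + b s) :
    1 / (τ : ℝ) * ∑ s ∈ Finset.range τ, a s ≤ c + 1 / (τ : ℝ) * ∑ s ∈ Finset.range τ, b s := by
  calc 1 / (τ : ℝ) * ∑ s ∈ Finset.range τ, a s ≤ 1 / (τ : ℝ) * ∑ s ∈ Finset.range τ, (c + b s) := by
        gcongr with s hs
        exact h s (Finset.mem_range.1 hs)
    _ = c + 1 / (τ : ℝ) * ∑ s ∈ Finset.range τ, b s := by
        rw [Finset.sum_add_distrib, Finset.sum_const, Finset.card_range, nsmul_eq_mul]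
        field_simp

variable {Ω : Type*} {mΩ : MeasurableSpace Ω} {μ : Measure Ω} [IsFiniteMeasure μ]

lemma integral_norm_sq_average_le (τ : ℕ) {X : ℕ → Ω → E} (hX : ∀ s < τ, MemLp (X s) 2 μ) :
    ∫ ω, ‖(1 / (τ : ℝ)) • ∑ s ∈ Finset.range τ, X s ω‖ ^ 2 ∂μ ≤
      (1 / (τ : ℝ)) * ∑ s ∈ Finset.range τ, ∫ ω, ‖X s ω‖ ^ 2 ∂μ := by
  have hint : ∀ s ∈ Finset.range τ, Integrable (fun ω => ‖X s ω‖ ^ 2) μ :=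
    fun s hs => (hX s (Finset.mem_range.1 hs)).integrable_norm_pow'
  rw [← integral_finsetSum _ hint, ← integral_const_mul]
  refine integral_mono_of_nonneg (.of_forall fun _ => by positivity)
    ((integrable_finsetSum _ hint).const_mul _) (.of_forall fun ω => ?_)
  simpa using norm_sq_inv_card_smul_sum_le (Finset.range τ) (X · ω)

end Averaging

section StochasticGradient

variable {Ω E : Type*} {m mΩ : MeasurableSpace Ω} {μ : Measure Ω} [IsProbabilityMeasure μ]
  [NormedAddCommGroup E] [InnerProductSpace ℝ E] [CompleteSpace E] {K : NNReal} {G : E → E}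

lemma integral_norm_sq_le_of_condExp_ae_eq_comp (hm : m ≤ mΩ) (hG : LipschitzWith K G)
    {X Y : Ω → E} (hX : MemLp X 2 μ) (hXm : StronglyMeasurable[m] X) (hY : MemLp Y 2 μ)
    (hcond : μ[Y|m] =ᵐ[μ] fun ω => G (X ω)) (θ : E) :
    ∫ ω, ‖Y ω‖ ^ 2 ∂μ ≤
      ∫ ω, ‖Y ω - G (X ω)‖ ^ 2 ∂μ + (2 * K ^ 2 * ∫ ω, ‖θ - X ω‖ ^ 2 ∂μ + 2 * ‖G θ‖ ^ 2) := by
  rw [integral_norm_sq_eq_of_condExp_ae_eq hm hY (hG.memLp_comp hX)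
    (hG.continuous.comp_stronglyMeasurable hXm) hcond]
  exact add_le_add_right (hG.integral_norm_sq_comp_le hX θ) _

end StochasticGradient

theorem bounded_local_model_update_general {Ω : Type*} {mΩ : MeasurableSpace Ω}
    (P : Measure Ω) [IsProbabilityMeasure P]
    (n d τ : ℕ) (hτ : 1 ≤ τ)
    (L β κ : ℝ) (ζ : Fin n → ℝ)
    (hL : 0 < L)
    (θ : EuclideanSpace ℝ (Fin d))
    (f : Fin n → EuclideanSpace ℝ (Fin d) → ℝ)
    (hlip : ∀ i, LipschitzWith (Real.toNNReal L) (gradient (f i)))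
    (hdissim : ∀ x : EuclideanSpace ℝ (Fin d),
      (1 / (n : ℝ)) * ∑ i, ‖gradient (f i) x‖ ^ 2 ≤
        β ^ 2 * ‖gradient (fun y => (1 / (n : ℝ)) * ∑ i, f i y) x‖ ^ 2 + κ ^ 2)
    (ℱ : Filtration ℕ mΩ)
    (θ' g : Fin n → ℕ → Ω → EuclideanSpace ℝ (Fin d))
    (hmeas : ∀ i, ∀ s ≤ τ, StronglyMeasurable[ℱ s] (θ' i s))
    (hunbiased : ∀ i, ∀ s < τ,
      P[g i s|ℱ s] =ᵐ[P] fun ω => gradient (f i) (θ' i s ω))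
    (hvar : ∀ i, ∀ s < τ,
      ∫ ω, ‖g i s ω - gradient (f i) (θ' i s ω)‖ ^ 2 ∂P ≤ (ζ i) ^ 2)
    (hL2θ : ∀ i, ∀ s ≤ τ, MemLp (θ' i s) 2 P)
    (hL2g : ∀ i, ∀ s < τ, MemLp (g i s) 2 P) :
    (1 / (n : ℝ)) *
        ∑ i, ∫ ω, ‖(1 / (τ : ℝ)) • ∑ s ∈ Finset.range τ, g i s ω‖ ^ 2 ∂P ≤
      (2 * L ^ 2 / ((n : ℝ) * τ)) *
          ∑ i, ∑ s ∈ Finset.range τ, ∫ ω, ‖θ - θ' i s ω‖ ^ 2 ∂P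
        + 2 * (β ^ 2 * ‖gradient (fun y => (1 / (n : ℝ)) * ∑ i, f i y) θ‖ ^ 2 + κ ^ 2)
        + (1 / (n : ℝ)) * ∑ i, (ζ i) ^ 2 := by
  have hstep : ∀ i, ∀ s < τ, ∫ ω, ‖g i s ω‖ ^ 2 ∂P ≤
      (ζ i ^ 2 + 2 * ‖gradient (f i) θ‖ ^ 2) + 2 * L ^ 2 * ∫ ω, ‖θ - θ' i s ω‖ ^ 2 ∂P := by
    intro i s hs
    have h := integral_norm_sq_le_of_condExp_ae_eq_comp (ℱ.le s) (hlip i) (hL2θ i s hs.le)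
      (hmeas i s hs.le) (hL2g i s hs) (hunbiased i s hs) θ
    rw [Real.coe_toNNReal L hL.le] at h
    linarith [hvar i s hs]
  calc _ ≤ 1 / (n : ℝ) * ∑ i, ((ζ i ^ 2 + 2 * ‖gradient (f i) θ‖ ^ 2) +
        1 / (τ : ℝ) * ∑ s ∈ Finset.range τ, 2 * L ^ 2 * ∫ ω, ‖θ - θ' i s ω‖ ^ 2 ∂P) := by
        gcongr with i
        exact (integral_norm_sq_average_le τ (hL2g i)).trans
          (one_div_mul_sum_range_le_add (by omega) (hstep i))
    _ = 2 * L ^ 2 / (n * τ) * ∑ i, ∑ s ∈ Finset.range τ, ∫ ω, ‖θ - θ' i s ω‖ ^ 2 ∂P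
          + 2 * (1 / (n : ℝ) * ∑ i, ‖gradient (f i) θ‖ ^ 2) + 1 / (n : ℝ) * ∑ i, ζ i ^ 2 := by
        simp only [Finset.sum_add_distrib, ← Finset.mul_sum]
        ring
    _ ≤ _ := by linarith [hdissim θ]

/-- Bounded Local Model Update lemma: with `d_i := (1/τ)·Σ_{s<τ} g_i^s`, under smoothness,
bounded dissimilarity, conditionally unbiased stochastic gradients with bounded variance,
`(1/n)·Σ_i E‖d_i‖² ≤ (2L²/(nτ))·Σ_i Σ_{s<τ} E‖θ − θ_i^s‖² + 2·(β²·‖∇f(θ)‖² + κ²) + ζ̄²`. -/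
theorem bounded_local_model_update {Ω : Type*} {mΩ : MeasurableSpace Ω}
    (P : Measure Ω) [IsProbabilityMeasure P]
    (n d τ : ℕ) (hn : 1 ≤ n) (hd : 1 ≤ d) (hτ : 1 ≤ τ)
    (L β κ η : ℝ) (ζ : Fin n → ℝ)
    (hL : 0 < L) (hβ : 1 ≤ β) (hκ : 0 ≤ κ) (hζ : ∀ i, 0 ≤ ζ i)
    (hη0 : 0 < η)
    (θ : EuclideanSpace ℝ (Fin d))
    (f : Fin n → EuclideanSpace ℝ (Fin d) → ℝ)
    (hdiff : ∀ i, Differentiable ℝ (f i))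
    (hlip : ∀ i, LipschitzWith (Real.toNNReal L) (gradient (f i)))
    (hdissim : ∀ x : EuclideanSpace ℝ (Fin d),
      (1 / (n : ℝ)) * ∑ i, ‖gradient (f i) x‖ ^ 2 ≤
        β ^ 2 * ‖gradient (fun y => (1 / (n : ℝ)) * ∑ i, f i y) x‖ ^ 2 + κ ^ 2)
    (ℱ : Filtration ℕ mΩ)
    (θ' g : Fin n → ℕ → Ω → EuclideanSpace ℝ (Fin d))
    (hinit : ∀ i, θ' i 0 = fun _ => θ)
    (hupdate : ∀ i, ∀ s < τ, θ' i (s + 1) = fun ω => θ' i s ω - η • g i s ω)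
    (hmeas : ∀ i, ∀ s ≤ τ, StronglyMeasurable[ℱ s] (θ' i s))
    (hunbiased : ∀ i, ∀ s < τ,
      P[g i s|ℱ s] =ᵐ[P] fun ω => gradient (f i) (θ' i s ω))
    (hvar : ∀ i, ∀ s < τ,
      ∫ ω, ‖g i s ω - gradient (f i) (θ' i s ω)‖ ^ 2 ∂P ≤ (ζ i) ^ 2)
    (hL2θ : ∀ i, ∀ s ≤ τ, MemLp (θ' i s) 2 P)
    (hL2g : ∀ i, ∀ s < τ, MemLp (g i s) 2 P) :
    (1 / (n : ℝ)) *
        ∑ i, ∫ ω, ‖(1 / (τ : ℝ)) • ∑ s ∈ Finset.range τ, g i s ω‖ ^ 2 ∂P ≤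
      (2 * L ^ 2 / ((n : ℝ) * τ)) *
          ∑ i, ∑ s ∈ Finset.range τ, ∫ ω, ‖θ - θ' i s ω‖ ^ 2 ∂P
        + 2 * (β ^ 2 * ‖gradient (fun y => (1 / (n : ℝ)) * ∑ i, f i y) θ‖ ^ 2 + κ ^ 2)
        + (1 / (n : ℝ)) * ∑ i, (ζ i) ^ 2 :=
  bounded_local_model_update_general P n d τ hτ L β κ ζ hL θ f hlip hdissim ℱ θ' g hmeas hunbiased
    hvar hL2θ hL2g
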